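/- Let H_β(x) = (1/2)(1 + tanh(βx)). For any a < 0 < b, the cell average (1/(b−a))∫_a^b H_β(x) dx converges as β → ∞ to b/(b − a), the exact volume fraction of {x > 0} in [a,b], and the error is bounded by (ln 2)/(β(b−a)). -/

import Mathlib

/-!
Since `log ∘ cosh` is an antiderivative of `tanh`, the cell integral of `H_β` is
`((b - a) + (log cosh (βb) - log cosh (βa)) / β) / 2`, while the exact value `b` equals
`((b - a) + (|b| - |a|)) / 2`. Moreover `|t| - log 2 ≤ log cosh t ≤ |t|`, because
`e^|t| / 2 ≤ cosh t ≤ e^|t|`. Hence the error of the cell average is a difference of two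
numbers in `[0, log 2]` divided by `2β(b - a)`, so it is at most `log 2 / (2β(b - a))`.
-/

open Filter Topology intervalIntegral Real

namespace Real

theorem continuous_tanh : Continuous tanh := by
  rw [show tanh = fun x => sinh x / cosh x from funext tanh_eq_sinh_div_cosh]
  exact continuous_sinh.div continuous_cosh fun x => (cosh_pos x).ne'

theorem hasDerivAt_log_cosh (x : ℝ) : HasDerivAt (fun x => log (cosh x)) (tanh x) x := by
  rw [tanh_eq_sinh_div_cosh]
  exact (hasDerivAt_cosh x).log (cosh_pos x).ne'

theorem log_cosh_le_abs (x : ℝ) : log (cosh x) ≤ |x| := by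
  rw [← cosh_abs, log_le_iff_le_exp (cosh_pos _), cosh_eq]
  have : exp (-|x|) ≤ exp |x| := exp_le_exp.2 (by linarith [abs_nonneg x])
  linarith

theorem abs_sub_log_two_le_log_cosh (x : ℝ) : |x| - log 2 ≤ log (cosh x) := by
  rw [sub_le_iff_le_add, ← log_exp |x|, ← log_mul (cosh_pos x).ne' two_ne_zero]
  apply log_le_log (exp_pos _)
  rw [cosh_eq]
  linarith [exp_abs_le x]

end Real

theorem integral_tanh_mul (a b : ℝ) {β : ℝ} (hβ : β ≠ 0) :
    ∫ x in a..b, tanh (β * x) = (log (cosh (β * b)) - log (cosh (β * a))) / β := by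
  rw [integral_comp_mul_left tanh hβ, smul_eq_mul, inv_mul_eq_div,
    integral_eq_sub_of_hasDerivAt (fun x _ => hasDerivAt_log_cosh x)
      (continuous_tanh.intervalIntegrable _ _)]

theorem integral_thinc (a b : ℝ) {β : ℝ} (hβ : β ≠ 0) :
    ∫ x in a..b, (1 / 2) * (1 + tanh (β * x)) =
      ((b - a) + (log (cosh (β * b)) - log (cosh (β * a))) / β) / 2 := by
  rw [integral_const_mul, integral_add (g := fun x => tanh (β * x)) intervalIntegrable_const
    ((continuous_tanh.comp (continuous_const_mul β)).intervalIntegrable _ _),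
    integral_tanh_mul a b hβ, intervalIntegral.integral_const, smul_eq_mul, mul_one]
  ring

theorem abs_thinc_cell_average_sub_le {a b β : ℝ} (ha : a ≤ 0) (hb : 0 ≤ b) (hab : a < b)
    (hβ : 0 < β) :
    |(1 / (b - a)) * (∫ x in a..b, (1 / 2) * (1 + tanh (β * x))) - b / (b - a)| ≤
      log 2 / (2 * β * (b - a)) := by
  have hba : 0 < b - a := sub_pos.2 hab
  have hdefect : (1 / (b - a)) * (∫ x in a..b, (1 / 2) * (1 + tanh (β * x))) - b / (b - a) =
      ((log (cosh (β * b)) - |β * b|) - (log (cosh (β * a)) - |β * a|)) /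
        (2 * β * (b - a)) := by
    rw [integral_thinc a b hβ.ne', abs_of_nonneg (by positivity : 0 ≤ β * b),
      abs_of_nonpos (mul_nonpos_of_nonneg_of_nonpos hβ.le ha)]
    field_simp
    ring
  rw [hdefect, abs_div, abs_of_pos (by positivity : 0 < 2 * β * (b - a))]
  gcongr
  rw [abs_le]
  constructor <;> linarith [log_cosh_le_abs (β * b), abs_sub_log_two_le_log_cosh (β * b),
    log_cosh_le_abs (β * a), abs_sub_log_two_le_log_cosh (β * a)]

/-- For a < 0 < b, the cell average of the THINC function `H_β(x) = (1/2)(1 + tanh(βx))`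
over [a,b] converges as β → ∞ to the exact volume fraction `b/(b−a)` of `{x > 0}`,
with error bounded by `ln 2 / (β(b−a))` for every β > 0. -/
theorem thinc_cell_average_accuracy (a b : ℝ) (ha : a < 0) (hb : 0 < b) :
    Tendsto (fun β : ℝ =>
        (1 / (b - a)) * ∫ x in a..b, (1 / 2) * (1 + Real.tanh (β * x)))
      atTop (𝓝 (b / (b - a))) ∧
    (∀ β : ℝ, 0 < β →
      |(1 / (b - a)) * (∫ x in a..b, (1 / 2) * (1 + Real.tanh (β * x))) - b / (b - a)| ≤
        Real.log 2 / (β * (b - a))) := by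
  have hba : 0 < b - a := by linarith
  have hbound : ∀ β : ℝ, 0 < β →
      |(1 / (b - a)) * (∫ x in a..b, (1 / 2) * (1 + Real.tanh (β * x))) - b / (b - a)| ≤
        Real.log 2 / (β * (b - a)) := fun β hβ =>
    (abs_thinc_cell_average_sub_le ha.le hb.le (by linarith) hβ).trans <|
      div_le_div_of_nonneg_left (log_nonneg one_le_two) (by positivity) (by nlinarith)
  refine ⟨?_, hbound⟩
  rw [← tendsto_sub_nhds_zero_iff]
  have hbound_tendsto : Tendsto (fun β : ℝ => log 2 / (β * (b - a))) atTop (𝓝 0) :=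
    tendsto_const_nhds.div_atTop (tendsto_id.atTop_mul_const hba)
  refine squeeze_zero_norm' ?_ hbound_tendsto
  filter_upwards [eventually_gt_atTop 0] with β hβ
  exact hbound β hβ
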